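/- The Tate construction restricted to T is the shifted colocalization (Corollary 2.13 of the paper, stated objectwise): suppose X ∈ T, let ΔX → X → ΛX → ΔX⟦1⟧ be a completion decomposition of X, and let Γ' → ΛX → L' → Γ'⟦1⟧ be a torsion decomposition of ΛX (so L' plays the role of the Tate construction t(X) = LΛX). Then there is an isomorphism L' ≅ ΔX⟦1⟧ in C. -/

import Mathlib

open CategoryTheory CategoryTheory.Limits CategoryTheory.Pretriangulated

universe v u

variable {C : Type u} [Category.{v} C] [HasZeroObject C] [HasShift C ℤ]
  [Preadditive C] [∀ n : ℤ, (shiftFunctor C n).Additive] [Pretriangulated C]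

/-- The orthogonal `T^⊥` of a class of objects `T`: all objects `Y` such that every
morphism `X⟦n⟧ ⟶ Y` with `X ∈ T` is zero. -/
def orth (T : Set C) : Set C :=
  {Y | ∀ X ∈ T, ∀ n : ℤ, ∀ f : X⟦n⟧ ⟶ Y, f = 0}

/-- A triangulated subcategory of `C`, given as a class of objects containing the zero
objects, closed under isomorphism, shifts, and extensions. -/
structure TriangulatedSub (C : Type u) [Category.{v} C] [HasZeroObject C] [HasShift C ℤ]
    [Preadditive C] [∀ n : ℤ, (shiftFunctor C n).Additive] [Pretriangulated C] where
  P : Set C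
  zero_mem : ∀ X : C, IsZero X → X ∈ P
  iso_closed : ∀ ⦃X Y : C⦄, (X ≅ Y) → X ∈ P → Y ∈ P
  shift_closed : ∀ (X : C) (n : ℤ), X ∈ P → X⟦n⟧ ∈ P
  ext_closed : ∀ (Tr : Triangle C), (Tr ∈ distTriang C) → Tr.obj₁ ∈ P → Tr.obj₃ ∈ P → Tr.obj₂ ∈ P

/-!
Rotating the completion triangle gives `X ⟶ ΛX ⟶ ΔX⟦1⟧ ⟶ X⟦1⟧`, which is a second torsion
decomposition of `ΛX`: `X ∈ T`, and `ΔX⟦1⟧ ∈ T^⊥` because `T^⊥` is closed under shifts.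
Torsion decompositions are unique: the vanishing of maps from `T` to `T^⊥` lets the second map
of each triangle factor through that of the other, and the factorizations are mutually inverse.
-/

section Orthogonal

variable {D : Type*} [Category D] [HasShift D ℤ] [Preadditive D]

lemma eq_zero_of_mem_orth {S : Set D} {A Y : D} (hA : A ∈ S) (hY : Y ∈ orth S)
    (φ : A ⟶ Y) : φ = 0 := by
  rw [← Preadditive.IsIso.comp_left_eq_zero ((shiftFunctorZero D ℤ).hom.app A)]
  exact hY A hA 0 _

lemma shift_mem_orth [∀ n : ℤ, (shiftFunctor D n).Additive] {S : Set D} {Y : D}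
    (hY : Y ∈ orth S) (m : ℤ) : Y⟦m⟧ ∈ orth S := by
  intro A hA n φ
  rw [← (shiftFunctor D (-m)).map_eq_zero_iff,
    ← Preadditive.IsIso.comp_left_eq_zero ((shiftFunctorAdd' D n (-m) (n + -m) rfl).hom.app A),
    ← Preadditive.IsIso.comp_right_eq_zero _
      ((shiftFunctorCompIsoId D m (-m) (add_neg_cancel m)).hom.app Y)]
  exact hY A hA _ _

end Orthogonal

lemma Triangle.mor₂_cancel {T : Triangle C} (hT : T ∈ distTriang C) {Y : C}
    (hY : ∀ φ : T.obj₁⟦(1 : ℤ)⟧ ⟶ Y, φ = 0) {α β : T.obj₃ ⟶ Y}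
    (h : T.mor₂ ≫ α = T.mor₂ ≫ β) : α = β := by
  rw [← sub_eq_zero]
  obtain ⟨γ, hγ⟩ :=
    Triangle.yoneda_exact₃ T hT (α - β) (by rw [Preadditive.comp_sub, h, sub_self])
  rw [hγ, hY γ, comp_zero]

lemma exists_iso_of_torsion_decomposition {S : Set C} {A₁ A₂ B C₁ C₂ : C}
    {u₁ : A₁ ⟶ B} {v₁ : B ⟶ C₁} {w₁ : C₁ ⟶ A₁⟦(1 : ℤ)⟧}
    {u₂ : A₂ ⟶ B} {v₂ : B ⟶ C₂} {w₂ : C₂ ⟶ A₂⟦(1 : ℤ)⟧}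
    (h₁ : Triangle.mk u₁ v₁ w₁ ∈ distTriang C) (h₂ : Triangle.mk u₂ v₂ w₂ ∈ distTriang C)
    (hA₁ : A₁ ∈ S) (hA₂ : A₂ ∈ S) (hC₁ : C₁ ∈ orth S) (hC₂ : C₂ ∈ orth S) :
    ∃ e : C₁ ≅ C₂, v₁ ≫ e.hom = v₂ := by
  obtain ⟨φ, hφ⟩ : ∃ φ : C₁ ⟶ C₂, v₂ = v₁ ≫ φ :=
    Triangle.yoneda_exact₂ _ h₁ v₂ (eq_zero_of_mem_orth hA₁ hC₂ _)
  obtain ⟨ψ, hψ⟩ : ∃ ψ : C₂ ⟶ C₁, v₁ = v₂ ≫ ψ :=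
    Triangle.yoneda_exact₂ _ h₂ v₁ (eq_zero_of_mem_orth hA₂ hC₁ _)
  refine ⟨⟨φ, ψ, ?_, ?_⟩, hφ.symm⟩
  · refine Triangle.mor₂_cancel h₁ (hC₁ A₁ hA₁ 1) (?_ : v₁ ≫ φ ≫ ψ = v₁ ≫ 𝟙 C₁)
    rw [← Category.assoc, ← hφ, ← hψ, Category.comp_id]
  · refine Triangle.mor₂_cancel h₂ (hC₂ A₂ hA₂ 1) (?_ : v₂ ≫ ψ ≫ φ = v₂ ≫ 𝟙 C₂)
    rw [← Category.assoc, ← hψ, ← hφ, Category.comp_id]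

theorem tate_iso_shift_delta_general (T : TriangulatedSub C) (X : C) (hX : X ∈ T.P)
    (ΔX ΛX : C) (d : ΔX ⟶ X) (e : X ⟶ ΛX) (f : ΛX ⟶ ΔX⟦(1 : ℤ)⟧)
    (hXdt : Triangle.mk d e f ∈ distTriang C) (hΔ : ΔX ∈ orth T.P)
    (Γ' L' : C) (g : Γ' ⟶ ΛX) (l : ΛX ⟶ L') (k : L' ⟶ Γ'⟦(1 : ℤ)⟧)
    (hΛdt : Triangle.mk g l k ∈ distTriang C) (hΓ' : Γ' ∈ T.P) (hL' : L' ∈ orth T.P) :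
    Nonempty (L' ≅ ΔX⟦(1 : ℤ)⟧) := by
  obtain ⟨iso, -⟩ := exists_iso_of_torsion_decomposition (rot_of_distTriang _ hXdt) hΛdt
    hX hΓ' (shift_mem_orth hΔ 1) hL'
  exact ⟨iso.symm⟩

/-- The Tate construction restricted to `T` is the shifted colocalization (objectwise):
for `X ∈ T` with completion decomposition `ΔX ⟶ X ⟶ ΛX` and a torsion decomposition
`Γ' ⟶ ΛX ⟶ L'` of `ΛX`, there is an isomorphism `L' ≅ ΔX⟦1⟧`. -/
theorem tate_iso_shift_delta (T : TriangulatedSub C) (X : C) (hX : X ∈ T.P)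
    (ΔX ΛX : C) (d : ΔX ⟶ X) (e : X ⟶ ΛX) (f : ΛX ⟶ ΔX⟦(1 : ℤ)⟧)
    (hXdt : Triangle.mk d e f ∈ distTriang C) (hΔ : ΔX ∈ orth T.P)
    (hΛ : ΛX ∈ orth (orth T.P))
    (Γ' L' : C) (g : Γ' ⟶ ΛX) (l : ΛX ⟶ L') (k : L' ⟶ Γ'⟦(1 : ℤ)⟧)
    (hΛdt : Triangle.mk g l k ∈ distTriang C) (hΓ' : Γ' ∈ T.P) (hL' : L' ∈ orth T.P) :
    Nonempty (L' ≅ ΔX⟦(1 : ℤ)⟧) :=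
  tate_iso_shift_delta_general T X hX ΔX ΛX d e f hXdt hΔ Γ' L' g l k hΛdt hΓ' hL'
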